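/- arXiv:2411.05765 — 3 statements merged into one kernel-verified Lean document; each statement's English description precedes it below -/
import Mathlib

section
/- For any interval I ⊆ J, the evolution family Φ has uniform bounded h-growth on I if and only if there exist constants K₀ ≥ 1 and β ≥ 0 such that ‖Φ(t,s)‖ ≤ K₀·(h(t)/h(s))^β for all t ≥ s with t, s ∈ I. -/
open Set

noncomputable section

/-- The operation `t ∗ s := h⁻¹ (h t · h s)` on `J`. -/
def star (h hinv : ℝ → ℝ) (t s : ℝ) : ℝ := hinv (h t * h s)

/-- The unit element `e∗ := h⁻¹ 1`. -/
def estar (hinv : ℝ → ℝ) : ℝ := hinv 1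

/-- The inverse `t^{∗-1} := h⁻¹ (1 / h t)`. -/
def sinv (h hinv : ℝ → ℝ) (t : ℝ) : ℝ := hinv (1 / h t)

/-- The absolute value `|t|∗ := t` if `e∗ ≤ t` and `t^{∗-1}` otherwise. -/
def absStar (h hinv : ℝ → ℝ) (t : ℝ) : ℝ := if estar hinv ≤ t then t else sinv h hinv t

/-- `h : J → (0,∞)` is a growth rate: a strictly increasing homeomorphism of
`J = (a₀,∞)` (or `J = ℝ`) onto `(0,∞)`, with (two-sided) inverse `hinv`. -/
structure GrowthRate (J : Set ℝ) (h hinv : ℝ → ℝ) : Prop where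
  J_eq : (∃ a₀ : ℝ, J = Set.Ioi a₀) ∨ J = Set.univ
  mono : StrictMonoOn h J
  cont : ContinuousOn h J
  pos : ∀ t ∈ J, 0 < h t
  inv_left : ∀ t ∈ J, hinv (h t) = t
  inv_mem : ∀ y ∈ Set.Ioi (0:ℝ), hinv y ∈ J
  inv_right : ∀ y ∈ Set.Ioi (0:ℝ), h (hinv y) = y
  inv_cont : ContinuousOn hinv (Set.Ioi 0)

variable {E : Type*} [NormedAddCommGroup E] [NormedSpace ℝ E]

/-- An evolution family on `J`: `Φ t t = I` and `Φ t u ∘ Φ u s = Φ t s`. -/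
def IsEvolutionFamily (J : Set ℝ) (Φ : ℝ → ℝ → (E →L[ℝ] E)) : Prop :=
  (∀ t ∈ J, Φ t t = 1) ∧ (∀ t ∈ J, ∀ u ∈ J, ∀ s ∈ J, Φ t u * Φ u s = Φ t s)

/-- `Φ` has a uniform `h`-dichotomy on `I` with projections `P` and constants `K, α`. -/
def HasUHDWith (I : Set ℝ) (h : ℝ → ℝ) (Φ : ℝ → ℝ → (E →L[ℝ] E))
    (P : ℝ → (E →L[ℝ] E)) (K α : ℝ) : Prop :=
  (∀ t ∈ I, P t * P t = P t) ∧
  (∀ t ∈ I, ∀ s ∈ I, P t * Φ t s = Φ t s * P s) ∧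
  (∀ s ∈ I, ∀ t ∈ I, s ≤ t → ‖Φ t s * P s‖ ≤ K * (h t / h s) ^ (-α)) ∧
  (∀ s ∈ I, ∀ t ∈ I, t ≤ s → ‖Φ t s * (1 - P s)‖ ≤ K * (h s / h t) ^ (-α))

/-- `Φ` has a uniform `h`-dichotomy on `I`. -/
def HasUHD (I : Set ℝ) (h : ℝ → ℝ) (Φ : ℝ → ℝ → (E →L[ℝ] E)) : Prop :=
  ∃ K ≥ (1:ℝ), ∃ α > (0:ℝ), ∃ P : ℝ → (E →L[ℝ] E), HasUHDWith I h Φ P K α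

/-- Uniform bounded `h`-growth on `I`: every solution satisfies
`|x t| ≤ C |x s|` for `s ∈ I` and `t ∈ [s, s∗T] ∩ I`. -/
def UnifBoundedHGrowth (J I : Set ℝ) (h hinv : ℝ → ℝ) (Φ : ℝ → ℝ → (E →L[ℝ] E)) : Prop :=
  ∃ T > estar hinv, ∃ C ≥ (1:ℝ), ∀ s₀ ∈ J, ∀ ξ : E, ∀ s ∈ I, ∀ t ∈ I,
    s ≤ t → t ≤ star h hinv s T → ‖(Φ t s₀) ξ‖ ≤ C * ‖(Φ s s₀) ξ‖

/-- Uniform bounded `h`-decay on `I`: every solution satisfies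
`|x t| ≤ C |x s|` for `s ∈ I` and `t ∈ [s∗T^{∗-1}, s] ∩ I`. -/
def UnifBoundedHDecay (J I : Set ℝ) (h hinv : ℝ → ℝ) (Φ : ℝ → ℝ → (E →L[ℝ] E)) : Prop :=
  ∃ T > estar hinv, ∃ C ≥ (1:ℝ), ∀ s₀ ∈ J, ∀ ξ : E, ∀ s ∈ I, ∀ t ∈ I,
    star h hinv s (sinv h hinv T) ≤ t → t ≤ s → ‖(Φ t s₀) ξ‖ ≤ C * ‖(Φ s s₀) ξ‖

/-- Uniform bounded `h`-growth and `h`-decay on `I`: every solution satisfies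
`|x t| ≤ C |x s|` for `s ∈ I` and `t ∈ [s∗T^{∗-1}, s∗T] ∩ I`. -/
def UnifBoundedHGrowthDecay (J I : Set ℝ) (h hinv : ℝ → ℝ) (Φ : ℝ → ℝ → (E →L[ℝ] E)) : Prop :=
  ∃ T > estar hinv, ∃ C ≥ (1:ℝ), ∀ s₀ ∈ J, ∀ ξ : E, ∀ s ∈ I, ∀ t ∈ I,
    star h hinv s (sinv h hinv T) ≤ t → t ≤ star h hinv s T → ‖(Φ t s₀) ξ‖ ≤ C * ‖(Φ s s₀) ξ‖

/-- `Φ` is uniformly `h`-noncritical on `[e∗,∞)`: there are `T > e∗` and `θ ∈ (0,1)` with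
`|x t| ≤ θ · sup {|x u| : u ∈ J, |u ∗ t^{∗-1}|∗ ≤ T}` for all `t ≥ T`, for every solution. -/
def UnifHNoncritical (J : Set ℝ) (h hinv : ℝ → ℝ) (Φ : ℝ → ℝ → (E →L[ℝ] E)) : Prop :=
  ∃ T > estar hinv, ∃ θ : ℝ, 0 < θ ∧ θ < 1 ∧
    ∀ s₀ ∈ J, ∀ ξ : E, ∀ t, T ≤ t →
      ‖(Φ t s₀) ξ‖ ≤ θ * sSup ((fun u => ‖(Φ u s₀) ξ‖) ''
        {u | u ∈ J ∧ absStar h hinv (star h hinv u (sinv h hinv t)) ≤ T})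

/-- `Φ` is `h`-expansive on `I`: there are `L, β > 0` such that every solution satisfies
`|x t| ≤ L (h(t∗a^{∗-1})^{-β} |x a| + h(b∗t^{∗-1})^{-β} |x b|)` for `[a,b] ⊆ I`, `a ≤ t ≤ b`. -/
def HExpansive (J I : Set ℝ) (h hinv : ℝ → ℝ) (Φ : ℝ → ℝ → (E →L[ℝ] E)) : Prop :=
  ∃ L > (0:ℝ), ∃ β > (0:ℝ), ∀ s₀ ∈ J, ∀ ξ : E, ∀ a ∈ I, ∀ b ∈ I, ∀ t, a ≤ t → t ≤ b →
    ‖(Φ t s₀) ξ‖ ≤ L * ((h (star h hinv t (sinv h hinv a))) ^ (-β) * ‖(Φ a s₀) ξ‖ +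
      (h (star h hinv b (sinv h hinv t))) ^ (-β) * ‖(Φ b s₀) ξ‖)

/-!
Bounded growth says `‖Φ(t, s)‖ ≤ C` over one step `h t ≤ q · h s`, where `q = h T > 1`.
Cutting `[s, t]` at intermediate times and using `Φ(t, s) = Φ(t, u) Φ(u, s)` gives
`‖Φ(t, s)‖ ≤ Cⁿ` as soon as `h t / h s ≤ qⁿ`, and the least such `n` is at most
`1 + log_q (h t / h s)`, so `Cⁿ ≤ C · (h t / h s) ^ log_q C`. Conversely, a power bound is
bounded by `K₀ · 2 ^ β` over steps `h t ≤ 2 · h s`, and `Φ(t, s₀) ξ = Φ(t, s) (Φ(s, s₀) ξ)`.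
-/

namespace GrowthRate

variable {J : Set ℝ} {h hinv : ℝ → ℝ}

lemma mem_of_le (hgr : GrowthRate J h hinv) {x y : ℝ} (hx : x ∈ J) (hxy : x ≤ y) : y ∈ J := by
  rcases hgr.J_eq with ⟨a₀, rfl⟩ | rfl
  · exact lt_of_lt_of_le hx hxy
  · trivial

lemma estar_mem (hgr : GrowthRate J h hinv) : estar hinv ∈ J :=
  hgr.inv_mem 1 (mem_Ioi.2 one_pos)

lemma apply_estar (hgr : GrowthRate J h hinv) : h (estar hinv) = 1 :=
  hgr.inv_right 1 (mem_Ioi.2 one_pos)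

lemma estar_lt_iff (hgr : GrowthRate J h hinv) {T : ℝ} (hT : T ∈ J) :
    estar hinv < T ↔ 1 < h T := by
  rw [← hgr.mono.lt_iff_lt hgr.estar_mem hT, hgr.apply_estar]

lemma le_star_iff (hgr : GrowthRate J h hinv) {s T t : ℝ} (hs : s ∈ J) (hT : T ∈ J)
    (ht : t ∈ J) : t ≤ star h hinv s T ↔ h t ≤ h s * h T := by
  have hpos : h s * h T ∈ Ioi (0 : ℝ) := mul_pos (hgr.pos s hs) (hgr.pos T hT)
  show t ≤ hinv (h s * h T) ↔ _
  rw [← hgr.mono.le_iff_le ht (hgr.inv_mem _ hpos), hgr.inv_right _ hpos]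

end GrowthRate

namespace IsEvolutionFamily

variable {J I : Set ℝ} {Φ : ℝ → ℝ → (E →L[ℝ] E)}

lemma apply_eq_apply_apply (hΦ : IsEvolutionFamily J Φ) {t s s₀ : ℝ} (ht : t ∈ J)
    (hs : s ∈ J) (hs₀ : s₀ ∈ J) (ξ : E) : Φ t s₀ ξ = Φ t s (Φ s s₀ ξ) := by
  rw [← hΦ.2 t ht s hs s₀ hs₀, mul_apply_eq_comp]

lemma norm_le_pow_of_norm_le {h hinv : ℝ → ℝ} (hgr : GrowthRate J h hinv)
    (hIJ : I ⊆ J) (hIc : I.OrdConnected) (hΦ : IsEvolutionFamily J Φ) {q C : ℝ}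
    (hq : 1 ≤ q) (hstep : ∀ s ∈ I, ∀ t ∈ I, s ≤ t → h t ≤ h s * q → ‖Φ t s‖ ≤ C) (n : ℕ) :
    ∀ s ∈ I, ∀ t ∈ I, s ≤ t → h t ≤ h s * q ^ n → ‖Φ t s‖ ≤ C ^ n := by
  induction n with
  | zero =>
    intro s hs t ht hst hle
    obtain rfl : t = s :=
      le_antisymm ((hgr.mono.le_iff_le (hIJ ht) (hIJ hs)).1 (by simpa using hle)) hst
    rw [hΦ.1 t (hIJ ht), pow_zero]
    exact ContinuousLinearMap.norm_id_le
  | succ n ih =>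
    intro s hs t ht hst hle
    have hs_pos := hgr.pos s (hIJ hs)
    have hq_pos : 0 < q := one_pos.trans_le hq
    have hst' : h s ≤ h t := hgr.mono.monotoneOn (hIJ hs) (hIJ ht) hst
    -- the intermediate time `u` splits `[s, t]` into a step of ratio `q` and one of ratio `qⁿ`
    set y := max (h s) (h t / q)
    have hy_pos : y ∈ Ioi (0 : ℝ) := lt_max_of_lt_left hs_pos
    set u := hinv y
    have hu : h u = y := hgr.inv_right y hy_pos
    have hsu : s ≤ u := by
      rw [← hgr.mono.le_iff_le (hIJ hs) (hgr.inv_mem y hy_pos), hu]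
      exact le_max_left _ _
    have hut : u ≤ t := by
      rw [← hgr.mono.le_iff_le (hgr.inv_mem y hy_pos) (hIJ ht), hu]
      exact max_le hst' (div_le_self (hs_pos.le.trans hst') hq)
    have huI : u ∈ I := hIc.out hs ht ⟨hsu, hut⟩
    have htu : ‖Φ t u‖ ≤ C := hstep u huI t ht hut <| by
      rw [hu, ← div_le_iff₀ hq_pos]
      exact le_max_right _ _
    have hus : ‖Φ u s‖ ≤ C ^ n := ih s hs u huI hsu <| by
      rw [hu]
      refine max_le (le_mul_of_one_le_right hs_pos.le (one_le_pow₀ hq)) ?_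
      rw [div_le_iff₀ hq_pos, mul_assoc, ← pow_succ]
      exact hle
    calc ‖Φ t s‖ = ‖Φ t u * Φ u s‖ := by rw [hΦ.2 t (hIJ ht) u (hIJ huI) s (hIJ hs)]
      _ ≤ ‖Φ t u‖ * ‖Φ u s‖ := norm_mul_le _ _
      _ ≤ C * C ^ n := mul_le_mul htu hus (norm_nonneg _) ((norm_nonneg _).trans htu)
      _ = C ^ (n + 1) := (pow_succ' C n).symm

end IsEvolutionFamily

lemma exists_pow_le_and_pow_le_mul_rpow_logb {q C r : ℝ} (hq : 1 < q) (hC : 1 ≤ C)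
    (hr : 1 ≤ r) : ∃ n : ℕ, r ≤ q ^ n ∧ C ^ n ≤ C * r ^ Real.logb q C := by
  have hr_pos : 0 < r := one_pos.trans_le hr
  have hC_pos : 0 < C := one_pos.trans_le hC
  have hlog_nonneg : 0 ≤ Real.logb q r := Real.logb_nonneg hq hr
  refine ⟨⌊Real.logb q r⌋₊ + 1, ?_, ?_⟩
  · calc r = q ^ Real.logb q r := (Real.rpow_logb (by positivity) hq.ne' hr_pos).symm
      _ ≤ q ^ ((⌊Real.logb q r⌋₊ + 1 : ℕ) : ℝ) :=
        Real.rpow_le_rpow_of_exponent_le hq.le (by push_cast; exact (Nat.lt_floor_add_one _).le)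
      _ = q ^ (⌊Real.logb q r⌋₊ + 1) := Real.rpow_natCast _ _
  · have hswap : C ^ Real.logb q r = r ^ Real.logb q C := by
      rw [Real.rpow_def_of_pos hC_pos, Real.rpow_def_of_pos hr_pos, Real.logb, Real.logb]
      ring_nf
    calc C ^ (⌊Real.logb q r⌋₊ + 1) = C * C ^ ((⌊Real.logb q r⌋₊ : ℕ) : ℝ) := by
          rw [Real.rpow_natCast, pow_succ']
      _ ≤ C * C ^ Real.logb q r :=
        mul_le_mul_of_nonneg_left
          (Real.rpow_le_rpow_of_exponent_le hC (Nat.floor_le hlog_nonneg)) hC_pos.le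
      _ = C * r ^ Real.logb q C := by rw [hswap]

section

variable {J I : Set ℝ} {h hinv : ℝ → ℝ} {Φ : ℝ → ℝ → (E →L[ℝ] E)}

lemma UnifBoundedHGrowth.exists_norm_le_mul_rpow (hgr : GrowthRate J h hinv) (hIJ : I ⊆ J)
    (hIc : I.OrdConnected) (hΦ : IsEvolutionFamily J Φ) (hbg : UnifBoundedHGrowth J I h hinv Φ) :
    ∃ K₀ ≥ (1:ℝ), ∃ β ≥ (0:ℝ), ∀ s ∈ I, ∀ t ∈ I, s ≤ t → ‖Φ t s‖ ≤ K₀ * (h t / h s) ^ β := by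
  obtain ⟨T, hT, C, hC, hgrowth⟩ := hbg
  have hTJ : T ∈ J := hgr.mem_of_le hgr.estar_mem hT.le
  have hq : 1 < h T := (hgr.estar_lt_iff hTJ).1 hT
  have hstep : ∀ s ∈ I, ∀ t ∈ I, s ≤ t → h t ≤ h s * h T → ‖Φ t s‖ ≤ C := by
    intro s hs t ht hst hle
    refine ContinuousLinearMap.opNorm_le_bound _ (by positivity) fun ξ => ?_
    have := hgrowth s (hIJ hs) ξ s hs t ht hst ((hgr.le_star_iff (hIJ hs) hTJ (hIJ ht)).2 hle)
    rwa [hΦ.1 s (hIJ hs), one_apply_eq_self] at this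
  refine ⟨C, hC, Real.logb (h T) C, Real.logb_nonneg hq hC, fun s hs t ht hst => ?_⟩
  have hs_pos := hgr.pos s (hIJ hs)
  have hr : 1 ≤ h t / h s :=
    (one_le_div hs_pos).2 (hgr.mono.monotoneOn (hIJ hs) (hIJ ht) hst)
  obtain ⟨n, hn, hCn⟩ := exists_pow_le_and_pow_le_mul_rpow_logb hq hC hr
  calc ‖Φ t s‖ ≤ C ^ n :=
        hΦ.norm_le_pow_of_norm_le hgr hIJ hIc hq.le hstep n s hs t ht hst
          ((div_le_iff₀' hs_pos).1 hn)
    _ ≤ C * (h t / h s) ^ Real.logb (h T) C := hCn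

lemma unifBoundedHGrowth_of_norm_le_mul_rpow (hgr : GrowthRate J h hinv) (hIJ : I ⊆ J)
    (hΦ : IsEvolutionFamily J Φ) {K₀ β : ℝ} (hK₀ : 1 ≤ K₀) (hβ : 0 ≤ β)
    (hbound : ∀ s ∈ I, ∀ t ∈ I, s ≤ t → ‖Φ t s‖ ≤ K₀ * (h t / h s) ^ β) :
    UnifBoundedHGrowth J I h hinv Φ := by
  have h2 : (2 : ℝ) ∈ Ioi 0 := mem_Ioi.2 two_pos
  have hTJ : hinv 2 ∈ J := hgr.inv_mem 2 h2
  have hT : h (hinv 2) = 2 := hgr.inv_right 2 h2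
  have h2β : 1 ≤ (2 : ℝ) ^ β := Real.one_le_rpow one_le_two hβ
  refine ⟨hinv 2, (hgr.estar_lt_iff hTJ).2 (by rw [hT]; exact one_lt_two), K₀ * 2 ^ β,
    one_le_mul_of_one_le_of_one_le hK₀ h2β, fun s₀ hs₀ ξ s hs t ht hst htT => ?_⟩
  have hs_pos := hgr.pos s (hIJ hs)
  have hratio : h t / h s ≤ 2 := by
    rw [div_le_iff₀' hs_pos, ← hT]
    exact (hgr.le_star_iff (hIJ hs) hTJ (hIJ ht)).1 htT
  rw [hΦ.apply_eq_apply_apply (hIJ ht) (hIJ hs) hs₀]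
  calc ‖Φ t s (Φ s s₀ ξ)‖ ≤ ‖Φ t s‖ * ‖Φ s s₀ ξ‖ := ContinuousLinearMap.le_opNorm _ _
    _ ≤ K₀ * 2 ^ β * ‖Φ s s₀ ξ‖ := by
      gcongr
      refine (hbound s hs t ht hst).trans ?_
      gcongr
      exact div_nonneg (hgr.pos t (hIJ ht)).le hs_pos.le

end

theorem statement2_general {J I : Set ℝ} {h hinv : ℝ → ℝ} (hgr : GrowthRate J h hinv)
    (hIJ : I ⊆ J) (hIc : I.OrdConnected)
    {E : Type*} [NormedAddCommGroup E] [NormedSpace ℝ E]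
    (Φ : ℝ → ℝ → (E →L[ℝ] E)) (hΦ : IsEvolutionFamily J Φ) :
    UnifBoundedHGrowth J I h hinv Φ ↔
      ∃ K₀ ≥ (1:ℝ), ∃ β ≥ (0:ℝ), ∀ s ∈ I, ∀ t ∈ I, s ≤ t →
        ‖Φ t s‖ ≤ K₀ * (h t / h s) ^ β :=
  ⟨UnifBoundedHGrowth.exists_norm_le_mul_rpow hgr hIJ hIc hΦ,
    fun ⟨_, hK₀, _, hβ, hbound⟩ => unifBoundedHGrowth_of_norm_le_mul_rpow hgr hIJ hΦ hK₀ hβ hbound⟩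

/-- uniform bounded `h`-growth on `I` is equivalent to
`‖Φ(t,s)‖ ≤ K₀ (h t / h s)^β` for all `t ≥ s` in `I`, for some `K₀ ≥ 1`, `β ≥ 0`. -/
theorem statement2 {J I : Set ℝ} {h hinv : ℝ → ℝ} (hgr : GrowthRate J h hinv)
    (hIJ : I ⊆ J) (hIc : I.OrdConnected)
    {E : Type*} [NormedAddCommGroup E] [NormedSpace ℝ E] [FiniteDimensional ℝ E]
    (Φ : ℝ → ℝ → (E →L[ℝ] E)) (hΦ : IsEvolutionFamily J Φ) :
    UnifBoundedHGrowth J I h hinv Φ ↔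
      ∃ K₀ ≥ (1:ℝ), ∃ β ≥ (0:ℝ), ∀ s ∈ I, ∀ t ∈ I, s ≤ t →
        ‖Φ t s‖ ≤ K₀ * (h t / h s) ^ β :=
  statement2_general hgr hIJ hIc Φ hΦ
end
end

section
/- Let I ⊆ J be an interval unbounded above. Assume there exist constants K₀ ≥ 1 and β ≥ 0 such that ‖Φ(t,s)‖ ≤ K₀·h(|t∗s^{∗-1}|∗)^β for all t, s ∈ I, and that Φ has a uniform h-dichotomy on I with constants K ≥ 1 and α > 0. Then α ≤ β. -/
/-!
Fix `s ∈ I` and let `t ≥ s` run through `I`, with `r = h t / h s`. Since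
`h(|t∗s^{∗-1}|∗) = h(|s∗t^{∗-1}|∗) = r`, the growth bound gives `‖Φ(t,s)‖, ‖Φ(s,t)‖ ≤ K₀ r^β`.
Writing `P s = Φ(s,t) Φ(t,s) P s` if `P s ≠ 0` (a nonzero idempotent has norm `≥ 1`), and
`1 = Φ(s,t) (1 - P t) Φ(t,s)` if `P s = 0`, the dichotomy yields `1 ≤ K r^{-α} · K₀ r^β`.
As `r` is unbounded, this forces `α ≤ β`.
-/


open Set

noncomputable section

variable {E : Type*} [NormedAddCommGroup E] [NormedSpace ℝ E]

open Filter Topology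

theorem IsIdempotentElem.one_le_norm {R : Type*} [NonUnitalNormedRing R] {p : R}
    (hp : IsIdempotentElem p) (hp0 : p ≠ 0) : 1 ≤ ‖p‖ := by
  have hpos : 0 < ‖p‖ := norm_pos_iff.2 hp0
  have hle : ‖p‖ ≤ ‖p‖ * ‖p‖ := by
    conv_lhs => rw [← hp.eq]
    exact norm_mul_le p p
  nlinarith

theorem nonneg_of_frequently_one_le_mul_rpow {C γ : ℝ}
    (hfreq : ∃ᶠ r in atTop, 1 ≤ C * r ^ γ) : 0 ≤ γ := by
  by_contra! hγ
  have hlim : Tendsto (fun r : ℝ => C * r ^ γ) atTop (𝓝 0) := by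
    simpa using (tendsto_rpow_neg_atTop (neg_pos.2 hγ)).const_mul C
  obtain ⟨r, hr, hr'⟩ := (hfreq.and_eventually (hlim.eventually (gt_mem_nhds one_pos))).exists
  exact hr'.not_ge hr

namespace GrowthRate

variable {J : Set ℝ} {h hinv : ℝ → ℝ}

theorem h_sinv (hgr : GrowthRate J h hinv) {x : ℝ} (hx : x ∈ J) : h (sinv h hinv x) = 1 / h x :=
  hgr.inv_right _ (one_div_pos.2 (hgr.pos x hx))

theorem h_absStar (hgr : GrowthRate J h hinv) {x : ℝ} (hx : x ∈ J) :
    h (absStar h hinv x) = max (h x) (h x)⁻¹ := by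
  have hpos : 0 < h x := hgr.pos x hx
  have h_estar : h (estar hinv) = 1 := hgr.inv_right 1 (mem_Ioi.2 one_pos)
  have h_estar_mem : estar hinv ∈ J := hgr.inv_mem 1 (mem_Ioi.2 one_pos)
  unfold absStar
  split_ifs with hle
  · have h1 : 1 ≤ h x := h_estar ▸ hgr.mono.monotoneOn h_estar_mem hx hle
    exact (max_eq_left ((inv_le_one_of_one_le₀ h1).trans h1)).symm
  · have h1 : h x < 1 := h_estar ▸ hgr.mono hx h_estar_mem (not_le.1 hle)
    rw [hgr.h_sinv hx, one_div, max_eq_right (h1.le.trans ((one_le_inv₀ hpos).2 h1.le))]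

theorem star_sinv_mem (hgr : GrowthRate J h hinv) {a b : ℝ} (ha : a ∈ J) (hb : b ∈ J) :
    star h hinv a (sinv h hinv b) ∈ J := by
  rw [_root_.star, hgr.h_sinv hb, mul_one_div]
  exact hgr.inv_mem _ (div_pos (hgr.pos a ha) (hgr.pos b hb))

theorem h_star_sinv (hgr : GrowthRate J h hinv) {a b : ℝ} (ha : a ∈ J) (hb : b ∈ J) :
    h (star h hinv a (sinv h hinv b)) = h a / h b := by
  rw [_root_.star, hgr.h_sinv hb, mul_one_div]
  exact hgr.inv_right _ (div_pos (hgr.pos a ha) (hgr.pos b hb))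

theorem h_absStar_star_sinv (hgr : GrowthRate J h hinv) {a b : ℝ} (ha : a ∈ J) (hb : b ∈ J) :
    h (absStar h hinv (star h hinv a (sinv h hinv b))) = max (h a / h b) (h b / h a) := by
  rw [hgr.h_absStar (hgr.star_sinv_mem ha hb), hgr.h_star_sinv ha hb, inv_div]

theorem h_absStar_star_sinv_comm (hgr : GrowthRate J h hinv) {a b : ℝ} (ha : a ∈ J) (hb : b ∈ J) :
    h (absStar h hinv (star h hinv a (sinv h hinv b))) =
      h (absStar h hinv (star h hinv b (sinv h hinv a))) := by
  rw [hgr.h_absStar_star_sinv ha hb, hgr.h_absStar_star_sinv hb ha, max_comm]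

theorem h_absStar_star_sinv_of_le (hgr : GrowthRate J h hinv) {a b : ℝ} (ha : a ∈ J) (hb : b ∈ J)
    (hba : b ≤ a) : h (absStar h hinv (star h hinv a (sinv h hinv b))) = h a / h b := by
  have hab : 1 ≤ h a / h b := (one_le_div (hgr.pos b hb)).2 (hgr.mono.monotoneOn hb ha hba)
  have hle : h b / h a ≤ h a / h b := by
    rw [← inv_div]
    exact (inv_le_one_of_one_le₀ hab).trans hab
  rw [hgr.h_absStar_star_sinv ha hb, max_eq_left hle]

theorem frequently_atTop_h_div {I : Set ℝ} (hgr : GrowthRate J h hinv) (hIJ : I ⊆ J)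
    (hIunb : ∀ b : ℝ, ∃ t ∈ I, b < t) {s : ℝ} (hs : s ∈ I) :
    ∃ᶠ r in atTop, ∃ t ∈ I, s ≤ t ∧ r = h t / h s := by
  have hs_pos : 0 < h s := hgr.pos s (hIJ hs)
  refine frequently_atTop.2 fun R => ?_
  set y := max 1 (R * h s)
  have hy : 0 < y := lt_max_of_lt_left one_pos
  obtain ⟨t, ht, hlt⟩ := hIunb (max s (hinv y))
  have hyt : y < h t :=
    hgr.inv_right y hy ▸ hgr.mono (hgr.inv_mem y hy) (hIJ ht) (le_max_right _ _ |>.trans_lt hlt)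
  refine ⟨h t / h s, ?_, t, ht, (le_max_left _ _).trans hlt.le, rfl⟩
  rw [le_div_iff₀ hs_pos]
  exact (le_max_right _ _).trans hyt.le

end GrowthRate

theorem HasUHDWith.one_le_mul_max_norm [Nontrivial E] {J I : Set ℝ} {h : ℝ → ℝ}
    {Φ : ℝ → ℝ → (E →L[ℝ] E)} {P : ℝ → (E →L[ℝ] E)} {K α : ℝ} (hUHD : HasUHDWith I h Φ P K α)
    (hΦ : IsEvolutionFamily J Φ) (hIJ : I ⊆ J) {s t : ℝ} (hs : s ∈ I) (ht : t ∈ I)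
    (hst : s ≤ t) : 1 ≤ K * (h t / h s) ^ (-α) * max ‖Φ t s‖ ‖Φ s t‖ := by
  obtain ⟨hP, hPΦ, hPbd, hQbd⟩ := hUHD
  have hΦst : Φ s t * Φ t s = 1 := by
    rw [hΦ.2 s (hIJ hs) t (hIJ ht) s (hIJ hs), hΦ.1 s (hIJ hs)]
  by_cases hPs : P s = 0
  · have hQ := hQbd t ht s hs hst
    calc (1 : ℝ) = ‖Φ s t * (1 - P t) * Φ t s‖ := by
          rw [mul_assoc, sub_mul, one_mul, hPΦ t ht s hs, hPs, mul_zero, sub_zero, hΦst, norm_one]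
      _ ≤ ‖Φ s t * (1 - P t)‖ * ‖Φ t s‖ := norm_mul_le _ _
      _ ≤ K * (h t / h s) ^ (-α) * max ‖Φ t s‖ ‖Φ s t‖ :=
          mul_le_mul hQ (le_max_left _ _) (norm_nonneg _) ((norm_nonneg _).trans hQ)
  · have hPbd' := hPbd s hs t ht hst
    calc (1 : ℝ) ≤ ‖P s‖ := IsIdempotentElem.one_le_norm (hP s hs) hPs
      _ = ‖Φ s t * (Φ t s * P s)‖ := by rw [← mul_assoc, hΦst, one_mul]
      _ ≤ ‖Φ s t‖ * ‖Φ t s * P s‖ := norm_mul_le _ _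
      _ ≤ max ‖Φ t s‖ ‖Φ s t‖ * (K * (h t / h s) ^ (-α)) :=
          mul_le_mul (le_max_right _ _) hPbd' (norm_nonneg _)
            ((norm_nonneg _).trans (le_max_right _ _))
      _ = K * (h t / h s) ^ (-α) * max ‖Φ t s‖ ‖Φ s t‖ := mul_comm _ _

theorem statement5_general {J I : Set ℝ} {h hinv : ℝ → ℝ} (hgr : GrowthRate J h hinv)
    (hIJ : I ⊆ J) (hIunb : ∀ b : ℝ, ∃ t ∈ I, b < t)
    {E : Type*} [NormedAddCommGroup E] [NormedSpace ℝ E] [Nontrivial E]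
    (Φ : ℝ → ℝ → (E →L[ℝ] E)) (hΦ : IsEvolutionFamily J Φ)
    (K₀ β : ℝ)
    (hbd : ∀ t ∈ I, ∀ s ∈ I,
      ‖Φ t s‖ ≤ K₀ * (h (absStar h hinv (star h hinv t (sinv h hinv s)))) ^ β)
    (K α : ℝ) (hK : 1 ≤ K)
    (P : ℝ → (E →L[ℝ] E)) (hUHD : HasUHDWith I h Φ P K α) :
    α ≤ β := by
  obtain ⟨s, hs, -⟩ := hIunb 0
  refine sub_nonneg.1 (nonneg_of_frequently_one_le_mul_rpow (C := K * K₀) ?_)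
  refine (hgr.frequently_atTop_h_div hIJ hIunb hs).mono ?_
  rintro r ⟨t, ht, hst, rfl⟩
  have hr : 0 < h t / h s := div_pos (hgr.pos t (hIJ ht)) (hgr.pos s (hIJ hs))
  have hgrowth : max ‖Φ t s‖ ‖Φ s t‖ ≤ K₀ * (h t / h s) ^ β := by
    refine max_le ?_ ?_
    · simpa only [hgr.h_absStar_star_sinv_of_le (hIJ ht) (hIJ hs) hst] using hbd t ht s hs
    · simpa only [hgr.h_absStar_star_sinv_comm (hIJ hs) (hIJ ht),
        hgr.h_absStar_star_sinv_of_le (hIJ ht) (hIJ hs) hst] using hbd s hs t ht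
  calc (1 : ℝ) ≤ K * (h t / h s) ^ (-α) * max ‖Φ t s‖ ‖Φ s t‖ :=
        hUHD.one_le_mul_max_norm hΦ hIJ hs ht hst
    _ ≤ K * (h t / h s) ^ (-α) * (K₀ * (h t / h s) ^ β) := by gcongr
    _ = K * K₀ * (h t / h s) ^ (β - α) := by
        rw [sub_eq_add_neg, Real.rpow_add hr]; ring

/-- if `‖Φ(t,s)‖ ≤ K₀ h(|t∗s^{∗-1}|∗)^β` on an interval `I` unbounded above
and `Φ` has a uniform `h`-dichotomy on `I` with constants `K ≥ 1`, `α > 0`, then `α ≤ β`. -/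
theorem statement5 {J I : Set ℝ} {h hinv : ℝ → ℝ} (hgr : GrowthRate J h hinv)
    (hIJ : I ⊆ J) (hIc : I.OrdConnected) (hIunb : ∀ b : ℝ, ∃ t ∈ I, b < t)
    {E : Type*} [NormedAddCommGroup E] [NormedSpace ℝ E] [FiniteDimensional ℝ E] [Nontrivial E]
    (Φ : ℝ → ℝ → (E →L[ℝ] E)) (hΦ : IsEvolutionFamily J Φ)
    (K₀ β : ℝ) (hK₀ : 1 ≤ K₀) (hβ : 0 ≤ β)
    (hbd : ∀ t ∈ I, ∀ s ∈ I,
      ‖Φ t s‖ ≤ K₀ * (h (absStar h hinv (star h hinv t (sinv h hinv s)))) ^ β)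
    (K α : ℝ) (hK : 1 ≤ K) (hα : 0 < α)
    (P : ℝ → (E →L[ℝ] E)) (hUHD : HasUHDWith I h Φ P K α) :
    α ≤ β :=
  statement5_general hgr hIJ hIunb Φ hΦ K₀ β hbd K α hK P hUHD
end
end

section
/- Let I ⊆ J be an interval and fix t₀ ∈ J. The evolution family Φ has a uniform h-dichotomy on I if and only if there exist an n×n real matrix P with P² = P and constants K ≥ 1, α > 0 such that ‖Φ(t,t₀)·P·Φ(t₀,s)‖ ≤ K·(h(t)/h(s))^{-α} for all t ≥ s with t, s ∈ I, and ‖Φ(t,t₀)·(I − P)·Φ(t₀,s)‖ ≤ K·(h(s)/h(t))^{-α} for all t ≤ s with t, s ∈ I. -/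
open Set

noncomputable section

variable {E : Type*} [NormedAddCommGroup E] [NormedSpace ℝ E]

/-! Invariant projections of an evolution family are all conjugate to one constant projection:
invariance forces `P s = Φ(s,t₀) P₀ Φ(t₀,s)` with `P₀ = Φ(t₀,t₁) P(t₁) Φ(t₁,t₀)`, and for such a
family `Φ(t,s) P(s) = Φ(t,t₀) P₀ Φ(t₀,s)`. Conversely every constant projection `P₀` defines an
invariant family in this way, so the dichotomy estimates and the estimates of the statement are
the same inequalities. -/

theorem IsIdempotentElem.mul_mul_of_mul_eq_one {M : Type*} [Monoid M] {a b e : M}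
    (hba : b * a = 1) (he : IsIdempotentElem e) : IsIdempotentElem (a * e * b) :=
  calc a * e * b * (a * e * b) = a * e * (b * a) * e * b := by simp only [mul_assoc]
    _ = a * e * b := by rw [hba, mul_one, mul_assoc a e e, he.eq]

def transportProj (Φ : ℝ → ℝ → (E →L[ℝ] E)) (t₀ : ℝ) (Q : E →L[ℝ] E) (s : ℝ) : E →L[ℝ] E :=
  Φ s t₀ * Q * Φ t₀ s

namespace IsEvolutionFamily

variable {J : Set ℝ} {Φ : ℝ → ℝ → (E →L[ℝ] E)} {t u s t₀ : ℝ}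

theorem mul_eq (hΦ : IsEvolutionFamily J Φ) (ht : t ∈ J) (hu : u ∈ J) (hs : s ∈ J) :
    Φ t u * Φ u s = Φ t s :=
  hΦ.2 t ht u hu s hs

theorem mul_eq_one (hΦ : IsEvolutionFamily J Φ) (ht : t ∈ J) (hs : s ∈ J) :
    Φ t s * Φ s t = 1 := by
  rw [hΦ.mul_eq ht hs ht, hΦ.1 t ht]

theorem isIdempotentElem_transportProj (hΦ : IsEvolutionFamily J Φ) (ht₀ : t₀ ∈ J)
    (hs : s ∈ J) {Q : E →L[ℝ] E} (hQ : IsIdempotentElem Q) :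
    IsIdempotentElem (transportProj Φ t₀ Q s) :=
  hQ.mul_mul_of_mul_eq_one (hΦ.mul_eq_one ht₀ hs)

theorem mul_transportProj (hΦ : IsEvolutionFamily J Φ) (ht₀ : t₀ ∈ J) (ht : t ∈ J)
    (hs : s ∈ J) (Q : E →L[ℝ] E) :
    Φ t s * transportProj Φ t₀ Q s = Φ t t₀ * Q * Φ t₀ s := by
  rw [transportProj, ← mul_assoc, ← mul_assoc, hΦ.mul_eq ht hs ht₀]

theorem mul_one_sub_transportProj (hΦ : IsEvolutionFamily J Φ) (ht₀ : t₀ ∈ J) (ht : t ∈ J)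
    (hs : s ∈ J) (Q : E →L[ℝ] E) :
    Φ t s * (1 - transportProj Φ t₀ Q s) = Φ t t₀ * (1 - Q) * Φ t₀ s := by
  rw [mul_sub, mul_one, hΦ.mul_transportProj ht₀ ht hs, ← hΦ.mul_eq ht ht₀ hs]
  noncomm_ring

theorem transportProj_mul_comm (hΦ : IsEvolutionFamily J Φ) (ht₀ : t₀ ∈ J) (ht : t ∈ J)
    (hs : s ∈ J) (Q : E →L[ℝ] E) :
    transportProj Φ t₀ Q t * Φ t s = Φ t s * transportProj Φ t₀ Q s := by
  rw [hΦ.mul_transportProj ht₀ ht hs, transportProj, mul_assoc, hΦ.mul_eq ht₀ ht hs]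

theorem transportProj_rebase (hΦ : IsEvolutionFamily J Φ) {t₁ : ℝ} (ht₀ : t₀ ∈ J)
    (ht₁ : t₁ ∈ J) (hs : s ∈ J) (Q : E →L[ℝ] E) :
    transportProj Φ t₁ Q s = transportProj Φ t₀ (Φ t₀ t₁ * Q * Φ t₁ t₀) s := by
  rw [transportProj, transportProj, ← hΦ.mul_eq hs ht₀ ht₁, ← hΦ.mul_eq ht₁ ht₀ hs]
  simp only [mul_assoc]

theorem eqOn_transportProj {I : Set ℝ} (hΦ : IsEvolutionFamily J Φ) (hIJ : I ⊆ J)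
    {P : ℝ → (E →L[ℝ] E)} (hP : ∀ t ∈ I, ∀ s ∈ I, P t * Φ t s = Φ t s * P s)
    {t₁ : ℝ} (ht₁ : t₁ ∈ I) : EqOn P (transportProj Φ t₁ (P t₁)) I := by
  intro s hs
  rw [transportProj, mul_assoc, hP t₁ ht₁ s hs, ← mul_assoc, hΦ.mul_eq_one (hIJ hs) (hIJ ht₁),
    one_mul]

end IsEvolutionFamily

section Dichotomy

variable {J I : Set ℝ} {h : ℝ → ℝ} {Φ : ℝ → ℝ → (E →L[ℝ] E)} {K α : ℝ}

theorem HasUHDWith.congr {P P' : ℝ → (E →L[ℝ] E)} (hP : HasUHDWith I h Φ P K α)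
    (hPP' : EqOn P P' I) : HasUHDWith I h Φ P' K α := by
  obtain ⟨hidem, hcomm, hstable, hunstable⟩ := hP
  refine ⟨fun t ht => ?_, fun t ht s hs => ?_, fun s hs t ht hst => ?_, fun s hs t ht hts => ?_⟩
  · rw [← hPP' ht, hidem t ht]
  · rw [← hPP' ht, ← hPP' hs, hcomm t ht s hs]
  · rw [← hPP' hs]; exact hstable s hs t ht hst
  · rw [← hPP' hs]; exact hunstable s hs t ht hts

theorem hasUHDWith_transportProj_iff (hΦ : IsEvolutionFamily J Φ) (hIJ : I ⊆ J) {t₀ : ℝ}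
    (ht₀ : t₀ ∈ J) {Q : E →L[ℝ] E} (hQ : IsIdempotentElem Q) :
    HasUHDWith I h Φ (transportProj Φ t₀ Q) K α ↔
      (∀ s ∈ I, ∀ t ∈ I, s ≤ t → ‖Φ t t₀ * Q * Φ t₀ s‖ ≤ K * (h t / h s) ^ (-α)) ∧
      (∀ s ∈ I, ∀ t ∈ I, t ≤ s → ‖Φ t t₀ * (1 - Q) * Φ t₀ s‖ ≤ K * (h s / h t) ^ (-α)) := by
  have hstable : ∀ s ∈ I, ∀ t ∈ I, Φ t s * transportProj Φ t₀ Q s = Φ t t₀ * Q * Φ t₀ s :=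
    fun s hs t ht => hΦ.mul_transportProj ht₀ (hIJ ht) (hIJ hs) Q
  have hunstable : ∀ s ∈ I, ∀ t ∈ I,
      Φ t s * (1 - transportProj Φ t₀ Q s) = Φ t t₀ * (1 - Q) * Φ t₀ s :=
    fun s hs t ht => hΦ.mul_one_sub_transportProj ht₀ (hIJ ht) (hIJ hs) Q
  constructor
  · rintro ⟨-, -, hPs, hPu⟩
    refine ⟨fun s hs t ht hst => ?_, fun s hs t ht hts => ?_⟩
    · rw [← hstable s hs t ht]; exact hPs s hs t ht hst
    · rw [← hunstable s hs t ht]; exact hPu s hs t ht hts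
  · rintro ⟨hPs, hPu⟩
    refine ⟨fun t ht => hΦ.isIdempotentElem_transportProj ht₀ (hIJ ht) hQ,
      fun t ht s hs => hΦ.transportProj_mul_comm ht₀ (hIJ ht) (hIJ hs) Q,
      fun s hs t ht hst => ?_, fun s hs t ht hts => ?_⟩
    · rw [hstable s hs t ht]; exact hPs s hs t ht hst
    · rw [hunstable s hs t ht]; exact hPu s hs t ht hts

end Dichotomy

theorem statement6_general {J I : Set ℝ} {h : ℝ → ℝ}
    (hIJ : I ⊆ J)
    {E : Type*} [NormedAddCommGroup E] [NormedSpace ℝ E]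
    (Φ : ℝ → ℝ → (E →L[ℝ] E)) (hΦ : IsEvolutionFamily J Φ)
    (t₀ : ℝ) (ht₀ : t₀ ∈ J) :
    HasUHD I h Φ ↔
      ∃ P : E →L[ℝ] E, P * P = P ∧ ∃ K ≥ (1:ℝ), ∃ α > (0:ℝ),
        (∀ s ∈ I, ∀ t ∈ I, s ≤ t →
          ‖Φ t t₀ * P * Φ t₀ s‖ ≤ K * (h t / h s) ^ (-α)) ∧
        (∀ s ∈ I, ∀ t ∈ I, t ≤ s →
          ‖Φ t t₀ * (1 - P) * Φ t₀ s‖ ≤ K * (h s / h t) ^ (-α)) := by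
  constructor
  · rintro ⟨K, hK, α, hα, P, hP⟩
    rcases I.eq_empty_or_nonempty with rfl | ⟨t₁, ht₁⟩
    · exact ⟨0, mul_zero 0, K, hK, α, hα, by simp, by simp⟩
    have hQ : IsIdempotentElem (Φ t₀ t₁ * P t₁ * Φ t₁ t₀) :=
      IsIdempotentElem.mul_mul_of_mul_eq_one (hΦ.mul_eq_one (hIJ ht₁) ht₀) (hP.1 t₁ ht₁)
    have hP_eq : EqOn P (transportProj Φ t₀ (Φ t₀ t₁ * P t₁ * Φ t₁ t₀)) I := fun s hs =>
      (hΦ.eqOn_transportProj hIJ hP.2.1 ht₁ hs).trans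
        (hΦ.transportProj_rebase ht₀ (hIJ ht₁) (hIJ hs) (P t₁))
    exact ⟨_, hQ, K, hK, α, hα, (hasUHDWith_transportProj_iff hΦ hIJ ht₀ hQ).1 (hP.congr hP_eq)⟩
  · rintro ⟨Q, hQ, K, hK, α, hα, hbounds⟩
    exact ⟨K, hK, α, hα, _, (hasUHDWith_transportProj_iff hΦ hIJ ht₀ hQ).2 hbounds⟩

/-- `Φ` has a uniform `h`-dichotomy on `I` iff there is a constant
projection `P` and constants `K ≥ 1`, `α > 0` with
`‖Φ(t,t₀) P Φ(t₀,s)‖ ≤ K (h t / h s)^{-α}` for `t ≥ s` in `I` and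
`‖Φ(t,t₀) (I-P) Φ(t₀,s)‖ ≤ K (h s / h t)^{-α}` for `t ≤ s` in `I`. -/
theorem statement6 {J I : Set ℝ} {h hinv : ℝ → ℝ} (hgr : GrowthRate J h hinv)
    (hIJ : I ⊆ J) (hIc : I.OrdConnected)
    {E : Type*} [NormedAddCommGroup E] [NormedSpace ℝ E] [FiniteDimensional ℝ E]
    (Φ : ℝ → ℝ → (E →L[ℝ] E)) (hΦ : IsEvolutionFamily J Φ)
    (t₀ : ℝ) (ht₀ : t₀ ∈ J) :
    HasUHD I h Φ ↔
      ∃ P : E →L[ℝ] E, P * P = P ∧ ∃ K ≥ (1:ℝ), ∃ α > (0:ℝ),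
        (∀ s ∈ I, ∀ t ∈ I, s ≤ t →
          ‖Φ t t₀ * P * Φ t₀ s‖ ≤ K * (h t / h s) ^ (-α)) ∧
        (∀ s ∈ I, ∀ t ∈ I, t ≤ s →
          ‖Φ t t₀ * (1 - P) * Φ t₀ s‖ ≤ K * (h s / h t) ^ (-α)) :=
  statement6_general hIJ Φ hΦ t₀ ht₀
end
end
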